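/- arXiv:1904.02875 — 7 statements merged into one kernel-verified Lean document; each statement's English description precedes it below -/
import Mathlib

section
/- For the exponential distribution with rate 1/β (β > 0), the sequence defined by v_0 ∈ ℝ and v_{n+1} = v_n + β·e^{-v_n/β} satisfies v_n / (β log n) → 1 as n → ∞. -/
/-!
Put `w n = v n / β`, so that `w (n + 1) = w n + exp (-w n)`. Then `u n = exp (w n)` obeys
`u (n + 1) = u n * exp (u n)⁻¹`, and `1 + x ≤ exp x ≤ 1 + 2x` on `[0, 1]` makes every step
of `u` (after the first) lie between `1` and `2`. Hence `u n` is squeezed between `n` and a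
multiple of `n`, so `w n = log (u n)` differs from `log n` by a bounded amount, which is
negligible against `log n`.
-/

open Filter Real Asymptotics

theorem Asymptotics.IsBigO.tendsto_div_one_of_sub {α : Type*} {l : Filter α} {a b : α → ℝ}
    (hb : Tendsto b l atTop) (hab : (a - b) =O[l] fun _ => (1 : ℝ)) :
    Tendsto (a / b) l (nhds 1) := by
  have hb_ne : ∀ᶠ x in l, b x ≠ 0 := hb.eventually_ne_atTop 0
  have one_isLittleO_b : (fun _ => (1 : ℝ)) =o[l] b :=
    (isLittleO_one_left_iff ℝ).mpr (tendsto_norm_atTop_atTop.comp hb)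
  exact (isEquivalent_iff_tendsto_one hb_ne).mp (hab.trans_isLittleO one_isLittleO_b).isEquivalent

lemma add_one_le_mul_exp_inv {u : ℝ} (hu : 0 < u) : u + 1 ≤ u * exp u⁻¹ :=
  calc u + 1 = u * (u⁻¹ + 1) := by field_simp; ring
    _ ≤ u * exp u⁻¹ := by gcongr; exact add_one_le_exp _

lemma mul_exp_inv_le_add_two {u : ℝ} (hu : 1 ≤ u) : u * exp u⁻¹ ≤ u + 2 := by
  have hu0 : 0 < u := by linarith
  have hinv_nonneg : 0 ≤ u⁻¹ := inv_nonneg.mpr hu0.le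
  have hexp : exp u⁻¹ - 1 ≤ 2 * u⁻¹ := by
    have hinv_le_one : |u⁻¹| ≤ 1 := by
      rwa [abs_of_nonneg hinv_nonneg, inv_le_one₀ hu0]
    simpa only [abs_of_nonneg hinv_nonneg] using
      (le_abs_self _).trans (abs_exp_sub_one_le hinv_le_one)
  calc u * exp u⁻¹ ≤ u * (1 + 2 * u⁻¹) := by gcongr; linarith
    _ = u + 2 := by field_simp

namespace ExpValueSequence

variable {w : ℕ → ℝ}

lemma exp_succ (hw : ∀ n, w (n + 1) = w n + exp (-w n)) (n : ℕ) :
    exp (w (n + 1)) = exp (w n) * exp (exp (w n))⁻¹ := by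
  rw [hw, exp_add, exp_neg]

lemma exp_zero_add_le (hw : ∀ n, w (n + 1) = w n + exp (-w n)) (n : ℕ) :
    exp (w 0) + n ≤ exp (w n) := by
  induction n with
  | zero => simp
  | succ n ih =>
    have := add_one_le_mul_exp_inv (exp_pos (w n))
    rw [exp_succ hw]
    push_cast
    linarith

lemma exp_le_exp_one_add (hw : ∀ n, w (n + 1) = w n + exp (-w n)) (n : ℕ) :
    exp (w (n + 1)) ≤ exp (w 1) + 2 * n := by
  induction n with
  | zero => simp
  | succ n ih =>
    have hone : 1 ≤ exp (w (n + 1)) := by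
      have := exp_zero_add_le hw (n + 1)
      push_cast at this
      linarith [exp_pos (w 0)]
    have := mul_exp_inv_le_add_two hone
    rw [exp_succ hw]
    push_cast
    linarith

lemma sub_log_mem_Icc (hw : ∀ n, w (n + 1) = w n + exp (-w n)) {n : ℕ}
    (hn : 1 ≤ n) :
    w n - log n ∈ Set.Icc 0 (log (exp (w 1) + 2)) := by
  have hn_pos : (0 : ℝ) < n := by exact_mod_cast hn
  have hlower : (n : ℝ) ≤ exp (w n) := by linarith [exp_zero_add_le hw n, exp_pos (w 0)]
  have hupper : exp (w n) ≤ (exp (w 1) + 2) * n := by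
    obtain ⟨m, rfl⟩ := Nat.exists_eq_add_of_le' hn
    have := exp_le_exp_one_add hw m
    push_cast
    nlinarith [exp_pos (w 1), (Nat.cast_nonneg m : (0 : ℝ) ≤ m)]
  constructor
  · have := log_le_log hn_pos hlower
    rw [log_exp] at this
    linarith
  · have := log_le_log (exp_pos _) hupper
    rw [log_exp, log_mul (by positivity) hn_pos.ne'] at this
    linarith

theorem tendsto_div_log (hw : ∀ n, w (n + 1) = w n + exp (-w n)) :
    Tendsto (fun n : ℕ => w n / log n) atTop (nhds 1) := by
  have hlog : Tendsto (fun n : ℕ => log n) atTop atTop :=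
    tendsto_log_atTop.comp tendsto_natCast_atTop_atTop
  refine IsBigO.tendsto_div_one_of_sub hlog ((isBigO_one_iff ℝ).mpr ?_)
  refine isBoundedUnder_of_eventually_le (a := log (exp (w 1) + 2)) ?_
  filter_upwards [eventually_ge_atTop 1] with n hn
  obtain ⟨h0, h1⟩ := sub_log_mem_Icc hw hn
  rwa [Pi.sub_apply, Real.norm_of_nonneg h0]

end ExpValueSequence

/-- For the exponential distribution with rate `1/β` (`β > 0`), the value sequence
`v_{n+1} = v_n + β e^{-v_n/β}` satisfies `v_n / (β log n) → 1`. -/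
theorem stmt_1 (β : ℝ) (hβ : 0 < β) (v : ℕ → ℝ)
    (hrec : ∀ n, v (n + 1) = v n + β * Real.exp (-(v n) / β)) :
    Tendsto (fun n : ℕ => v n / (β * Real.log n)) atTop (nhds 1) := by
  have hw : ∀ n, v (n + 1) / β = v n / β + exp (-(v n / β)) := by
    intro n
    rw [hrec, neg_div]
    field_simp
  simpa only [div_mul_eq_div_div] using ExpValueSequence.tendsto_div_log hw
end

section
/- For the exponential distribution with rate 1/β, the sequence v_{n+1} = v_n + β e^{-v_n/β} (with v_0 ≥ 0) satisfies v_n = β log n + o(log n); more precisely, e^{v_n/β}/n → 1 as n → ∞. -/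
/-!
With `u n = exp (v n / β)` the recursion becomes `u (n + 1) = u n * exp (u n)⁻¹`. Since
`exp t ≥ 1 + t`, each step adds at least `1`, so `u n → ∞`; and since `x (exp x⁻¹ - 1) → 1`
as `x → ∞` (the derivative of `exp` at `0`), the increments `u (n + 1) - u n` tend to `1`.
Cesàro averaging of the increments then gives `u n / n → 1`.
-/

open Filter Real Finset Topology

theorem tendsto_div_natCast_of_tendsto_sub {u : ℕ → ℝ} {l : ℝ}
    (h : Tendsto (fun n => u (n + 1) - u n) atTop (𝓝 l)) :
    Tendsto (fun n : ℕ => u n / n) atTop (𝓝 l) := by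
  have hinit : Tendsto (fun n : ℕ => u 0 / n) atTop (𝓝 0) :=
    tendsto_const_nhds.div_atTop tendsto_natCast_atTop_atTop
  have hsum := hinit.add h.cesaro
  rw [zero_add] at hsum
  refine hsum.congr fun n => ?_
  rw [sum_range_sub, div_eq_inv_mul, ← mul_add, add_sub_cancel, inv_mul_eq_div]

theorem tendsto_mul_exp_inv_sub_one_atTop :
    Tendsto (fun x : ℝ => x * (exp x⁻¹ - 1)) atTop (𝓝 1) := by
  have hslope : Tendsto (fun t : ℝ => t⁻¹ * (exp t - 1)) (𝓝[>] 0) (𝓝 1) := by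
    simpa using (hasDerivAt_exp 0).tendsto_slope_zero_right
  exact (hslope.comp tendsto_inv_atTop_nhdsGT_zero).congr fun x => by simp

theorem add_natCast_le_of_exp_inv_step {u : ℕ → ℝ} (hu : ∀ n, u (n + 1) = u n * exp (u n)⁻¹)
    (hu0 : 0 < u 0) (n : ℕ) : u 0 + n ≤ u n := by
  induction n with
  | zero => simp
  | succ n ih =>
    have hpos : 0 < u n := by linarith [(Nat.cast_nonneg n : (0 : ℝ) ≤ n)]
    calc u 0 + ↑(n + 1) ≤ u n + 1 := by push_cast; linarith
      _ = u n * ((u n)⁻¹ + 1) := by rw [mul_add, mul_inv_cancel₀ hpos.ne', mul_one, add_comm]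
      _ ≤ u (n + 1) := hu n ▸ mul_le_mul_of_nonneg_left (add_one_le_exp _) hpos.le

theorem tendsto_div_natCast_of_exp_inv_step {u : ℕ → ℝ}
    (hu : ∀ n, u (n + 1) = u n * exp (u n)⁻¹) (hu0 : 0 < u 0) :
    Tendsto (fun n : ℕ => u n / n) atTop (𝓝 1) := by
  have hu_top : Tendsto u atTop atTop :=
    tendsto_atTop_mono (add_natCast_le_of_exp_inv_step hu hu0)
      (tendsto_atTop_add_const_left _ _ tendsto_natCast_atTop_atTop)
  refine tendsto_div_natCast_of_tendsto_sub ?_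
  refine (tendsto_mul_exp_inv_sub_one_atTop.comp hu_top).congr fun n => ?_
  simp [hu n, mul_sub]

theorem stmt_2_general (β : ℝ) (hβ : 0 < β) (v : ℕ → ℝ)
    (hrec : ∀ n, v (n + 1) = v n + β * Real.exp (-(v n) / β)) :
    Tendsto (fun n : ℕ => Real.exp (v n / β) / n) atTop (nhds 1) := by
  refine tendsto_div_natCast_of_exp_inv_step (fun n => ?_) (exp_pos _)
  rw [hrec n, ← exp_neg, ← exp_add, add_div, mul_div_cancel_left₀ _ hβ.ne', neg_div]

/-- For the exponential distribution, `v_{n+1} = v_n + β e^{-v_n/β}` with `v_0 ≥ 0`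
satisfies `e^{v_n/β}/n → 1` as `n → ∞`. -/
theorem stmt_2 (β : ℝ) (hβ : 0 < β) (v : ℕ → ℝ) (hv0 : 0 ≤ v 0)
    (hrec : ∀ n, v (n + 1) = v n + β * Real.exp (-(v n) / β)) :
    Tendsto (fun n : ℕ => Real.exp (v n / β) / n) atTop (nhds 1) :=
  stmt_2_general β hβ v hrec
end

section
/- For the uniform distribution on [a,b], the value recurrence v_{n+1} = v_n + (b - v_n)²/(2(b-a)) (with a ≤ v_0 < b) satisfies n·(b - v_n) → 2(b-a) as n → ∞. -/
/-!
With `w n = b - v n` and `c = 2 (b - a)` the recurrence becomes `w (n+1) = w n - w n ^ 2 / c`,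
which linearises under inversion: `1 / w (n+1) - 1 / w n = 1 / (c - w n)`. The increments are at
least `1 / c`, so `w n → 0`, hence they tend to `1 / c`, and by Cesàro `1 / (n w n) → 1 / c`.
-/

open Filter Finset Topology

namespace QuadraticDecay

variable {c : ℝ} {w : ℕ → ℝ} (hrec : ∀ n, w (n + 1) = w n - w n ^ 2 / c)
  (hw0 : 0 < w 0) (hw0c : w 0 < c)
include hrec hw0 hw0c

theorem pos_and_lt (n : ℕ) : 0 < w n ∧ w n < c := by
  induction n with
  | zero => exact ⟨hw0, hw0c⟩
  | succ n ih =>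
    obtain ⟨hpos, hlt⟩ := ih
    have hc : 0 < c := hpos.trans hlt
    have hfactor : w (n + 1) = w n * (c - w n) / c := by rw [hrec n]; field_simp
    have hdec : w (n + 1) ≤ w n := by rw [hrec n]; linarith [div_nonneg (sq_nonneg (w n)) hc.le]
    exact ⟨by rw [hfactor]; exact div_pos (mul_pos hpos (by linarith)) hc, hdec.trans_lt hlt⟩

theorem inv_succ_sub_inv (n : ℕ) : (w (n + 1))⁻¹ - (w n)⁻¹ = (c - w n)⁻¹ := by
  obtain ⟨hpos, hlt⟩ := pos_and_lt hrec hw0 hw0c n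
  have hc : c ≠ 0 := (hpos.trans hlt).ne'
  have hgap : c - w n ≠ 0 := (sub_pos.2 hlt).ne'
  rw [hrec n, show w n - w n ^ 2 / c = w n * (c - w n) / c by field_simp]
  field_simp
  ring

theorem inv_eq_inv_zero_add_sum (n : ℕ) :
    (w n)⁻¹ = (w 0)⁻¹ + ∑ i ∈ range n, (c - w i)⁻¹ := by
  rw [Finset.sum_congr rfl fun i _ => (inv_succ_sub_inv hrec hw0 hw0c i).symm,
    Finset.sum_range_sub (fun i => (w i)⁻¹)]
  ring

theorem natCast_div_le_inv (n : ℕ) : n / c ≤ (w n)⁻¹ := by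
  have hc : 0 < c := hw0.trans hw0c
  have hstep : ∀ i, c⁻¹ ≤ (c - w i)⁻¹ := fun i => by
    obtain ⟨hpos, hlt⟩ := pos_and_lt hrec hw0 hw0c i
    exact inv_anti₀ (sub_pos.2 hlt) (by linarith)
  calc (n : ℝ) / c = ∑ _i ∈ range n, c⁻¹ := by simp [div_eq_mul_inv]
    _ ≤ ∑ i ∈ range n, (c - w i)⁻¹ := Finset.sum_le_sum fun i _ => hstep i
    _ ≤ (w n)⁻¹ := by rw [inv_eq_inv_zero_add_sum hrec hw0 hw0c n]; linarith [inv_pos.2 hw0]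

theorem tendsto_zero : Tendsto w atTop (𝓝 0) := by
  have hc : 0 < c := hw0.trans hw0c
  have hinv : Tendsto (fun n => (w n)⁻¹) atTop atTop :=
    tendsto_atTop_mono (natCast_div_le_inv hrec hw0 hw0c)
      ((tendsto_natCast_atTop_atTop (R := ℝ)).atTop_div_const hc)
  exact hinv.inv_tendsto_atTop.congr fun n => inv_inv (w n)

theorem tendsto_inv_natCast_mul_inv :
    Tendsto (fun n : ℕ => (n : ℝ)⁻¹ * (w n)⁻¹) atTop (𝓝 c⁻¹) := by
  have hc : c ≠ 0 := (hw0.trans hw0c).ne'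
  have hincr : Tendsto (fun n => (c - w n)⁻¹) atTop (𝓝 c⁻¹) := by
    simpa using ((tendsto_const_nhds (x := c)).sub (tendsto_zero hrec hw0 hw0c)).inv₀ (by simpa)
  have hinit : Tendsto (fun n : ℕ => (n : ℝ)⁻¹ * (w 0)⁻¹) atTop (𝓝 0) := by
    simpa using (tendsto_inv_atTop_zero.comp tendsto_natCast_atTop_atTop).mul_const (w 0)⁻¹
  have hsum := hincr.cesaro.add hinit
  rw [add_zero] at hsum
  refine hsum.congr fun n => ?_
  rw [inv_eq_inv_zero_add_sum hrec hw0 hw0c n]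
  ring

theorem tendsto_natCast_mul : Tendsto (fun n : ℕ => (n : ℝ) * w n) atTop (𝓝 c) := by
  have hc : c ≠ 0 := (hw0.trans hw0c).ne'
  have h := (tendsto_inv_natCast_mul_inv hrec hw0 hw0c).inv₀ (inv_ne_zero hc)
  rw [inv_inv] at h
  refine h.congr fun n => ?_
  rw [mul_inv, inv_inv, inv_inv]

end QuadraticDecay

/-- For the uniform distribution on `[a,b]`, the value recurrence
`v_{n+1} = v_n + (b - v_n)²/(2(b-a))` with `a ≤ v_0 < b` satisfies
`n (b - v_n) → 2(b-a)`. -/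
theorem stmt_3 (a b : ℝ) (hab : a < b) (v : ℕ → ℝ) (hv0 : a ≤ v 0) (hv0' : v 0 < b)
    (hrec : ∀ n, v (n + 1) = v n + (b - v n) ^ 2 / (2 * (b - a))) :
    Tendsto (fun n : ℕ => (n : ℝ) * (b - v n)) atTop (nhds (2 * (b - a))) :=
  QuadraticDecay.tendsto_natCast_mul (fun n => by rw [hrec n]; ring) (by linarith) (by linarith)
end

section
/- Suppose w_i ∈ [0,1) with i·(1-w_i) → λ > 0 as i → ∞. Then (1/N)·(1 + Σ_{n=1}^{N-1} Π_{i=n}^{N-1} w_i) → 1/(λ+1) as N → ∞. -/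
/-!
Write `A_N = 1 + ∑_{n=1}^{N-1} ∏_{i=n}^{N-1} w_i`, so that `A_{N+1} = 1 + w_N A_N`. The deviation
`x_N = A_N - N/(λ+1)` then satisfies `x_{N+1} = w_N x_N + e_N` with
`e_N = (λ - N(1 - w_N))/(λ+1) → 0`. Since `|w_N| ≤ 1`, `|x_N|` grows at most like the partial sums
of `|e_N|`, which are `o(N)` by Cesàro, hence `A_N / N → 1/(λ+1)`.
-/

open Filter Finset Topology

lemma tendsto_div_natCast_zero_of_abs_succ_le {x b : ℕ → ℝ} (hb : Tendsto b atTop (𝓝 0))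
    (hx : ∀ᶠ n in atTop, |x (n + 1)| ≤ |x n| + |b n|) :
    Tendsto (fun n : ℕ => x n / n) atTop (𝓝 0) := by
  obtain ⟨N, hN⟩ := eventually_atTop.mp hx
  have hbound : ∀ n ≥ N, |x n| ≤ |x N| + ∑ k ∈ range n, |b k| := by
    intro n hn
    induction n, hn using Nat.le_induction with
    | base => simpa using sum_nonneg fun k _ => abs_nonneg (b k)
    | succ n hn ih => rw [sum_range_succ]; linarith [hN n hn]
  have hcesaro : Tendsto (fun n : ℕ => (n : ℝ)⁻¹ * ∑ k ∈ range n, |b k|) atTop (𝓝 0) := by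
    simpa using hb.abs.cesaro
  have hmajorant : Tendsto (fun n : ℕ => |x N| / n + (n : ℝ)⁻¹ * ∑ k ∈ range n, |b k|)
      atTop (𝓝 0) := by
    simpa using (tendsto_const_div_atTop_nhds_zero_nat _).add hcesaro
  refine squeeze_zero_norm' ?_ hmajorant
  filter_upwards [eventually_ge_atTop N] with n hn
  calc ‖x n / n‖ = |x n| / n := by rw [Real.norm_eq_abs, abs_div, Nat.abs_cast]
    _ ≤ (|x N| + ∑ k ∈ range n, |b k|) / n := by gcongr; exact hbound n hn
    _ = _ := by ring

lemma tendsto_div_natCast_of_eventually_succ_eq_one_add_mul {A w : ℕ → ℝ} {lam : ℝ}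
    (hlam : lam + 1 ≠ 0) (hw : ∀ n, |w n| ≤ 1)
    (hlim : Tendsto (fun n : ℕ => (n : ℝ) * (1 - w n)) atTop (𝓝 lam))
    (hA : ∀ᶠ n in atTop, A (n + 1) = 1 + w n * A n) :
    Tendsto (fun n : ℕ => A n / n) atTop (𝓝 (1 / (lam + 1))) := by
  set x : ℕ → ℝ := fun n => A n - n / (lam + 1)
  set e : ℕ → ℝ := fun n => (lam - n * (1 - w n)) / (lam + 1)
  have hx : ∀ᶠ n in atTop, x (n + 1) = w n * x n + e n := by
    filter_upwards [hA] with n hn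
    simp only [x, e, hn]
    push_cast
    field_simp
    ring
  have he : Tendsto e atTop (𝓝 0) := by
    simpa [e] using ((tendsto_const_nhds (x := lam)).sub hlim).div_const (lam + 1)
  have hx_abs : ∀ᶠ n in atTop, |x (n + 1)| ≤ |x n| + |e n| := by
    filter_upwards [hx] with n hn
    calc |x (n + 1)| ≤ |w n * x n| + |e n| := hn ▸ abs_add_le _ _
      _ ≤ |x n| + |e n| := by
        rw [abs_mul]; gcongr; exact mul_le_of_le_one_left (abs_nonneg _) (hw n)
  have hxdiv := tendsto_div_natCast_zero_of_abs_succ_le he hx_abs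
  rw [← zero_add (1 / (lam + 1))]
  refine (hxdiv.add_const _).congr' ?_
  filter_upwards [eventually_ne_atTop 0] with n hn
  have : (n : ℝ) ≠ 0 := Nat.cast_ne_zero.mpr hn
  simp only [x]
  field_simp
  ring

lemma one_add_sum_prod_Icc_succ {R : Type*} [CommSemiring R] (w : ℕ → R) (N : ℕ) :
    1 + ∑ n ∈ Icc 1 (N + 1), ∏ i ∈ Icc n (N + 1), w i
      = 1 + w (N + 1) * (1 + ∑ n ∈ Icc 1 N, ∏ i ∈ Icc n N, w i) := by
  have hprod : ∀ n ∈ Icc 1 (N + 1),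
      ∏ i ∈ Icc n (N + 1), w i = (∏ i ∈ Icc n N, w i) * w (N + 1) :=
    fun n hn => prod_Icc_succ_top (mem_Icc.mp hn).2 w
  rw [sum_congr rfl hprod, ← sum_mul, sum_Icc_succ_top (by omega),
    Icc_eq_empty_of_lt N.lt_succ_self, prod_empty]
  ring

/-- If `w_i ∈ [0,1)` with `i(1 - w_i) → λ > 0`, then
`(1 + ∑_{n=1}^{N-1} ∏_{i=n}^{N-1} w_i)/N → 1/(λ+1)`. -/
theorem stmt_9 (w : ℕ → ℝ) (lam : ℝ) (hlam : 0 < lam)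
    (hw : ∀ i, w i ∈ Set.Ico (0 : ℝ) 1)
    (hlim : Tendsto (fun i : ℕ => (i : ℝ) * (1 - w i)) atTop (nhds lam)) :
    Tendsto (fun N : ℕ =>
        (1 + ∑ n ∈ Finset.Icc 1 (N - 1), ∏ i ∈ Finset.Icc n (N - 1), w i) / N)
      atTop (nhds (1 / (lam + 1))) := by
  refine tendsto_div_natCast_of_eventually_succ_eq_one_add_mul (by linarith)
    (fun n => abs_le.mpr ⟨by linarith [(hw n).1], (hw n).2.le⟩) hlim ?_
  filter_upwards [eventually_ge_atTop 1] with n hn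
  obtain ⟨m, rfl⟩ := Nat.exists_eq_add_of_le' hn
  simpa using one_add_sum_prod_Icc_succ w m
end

section
/- Suppose w_i ∈ [0,1) with i·(1-w_i) → λ > 0 as i → ∞. Then (1/N²)·(1 + Σ_{n=1}^{N-1} (2N+1-2n) Π_{i=n}^{N-1} w_i) → 2/((λ+1)(λ+2)) as N → ∞. -/
/-!
Write `S_N = ∑_{n=1}^{N-1} ∏_{i=n}^{N-1} w_i` and `Q_N = ∑_{n=1}^{N-1} (N - n) ∏_{i=n}^{N-1} w_i`.
The quantity is `(1 + 2 Q_N + S_N) / N²`, and peeling off the factor `w_N` gives the recurrences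
`S_{N+1} = w_N (S_N + 1)` and `Q_{N+1} = w_N (Q_N + S_N + 1)`.

A recurrence `x_{N+1} = w_N (x_N + y_N)` with `w_N = 1 - λ/N + o(1/N)` and `y_N ~ β N^k` forces
`x_N ~ β N^{k+1} / (λ + k + 1)`: normalised by `N^{k+1}` it reads `a_{N+1} = r_N a_N + b_N` with
`N (1 - r_N) → μ = λ + k + 1` and `N b_N → β`, so the distance of `a_N` from `β/μ` shrinks by a
factor `1 - μ/(2N)` per step up to an error `o(1/N)`, and the divergence of the harmonic series
drives it to zero. Applied twice, `S_N / N → 1/(λ+1)` and `Q_N / N² → 1/((λ+1)(λ+2))`.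
-/

open Filter Finset Topology

lemma eventually_lt_of_le_one_sub_div_mul {v : ℕ → ℝ} {m η : ℝ} (hm : 0 < m) (hη : 0 < η)
    (hv : ∀ᶠ N : ℕ in atTop, v (N + 1) ≤ (1 - m / N) * v N) :
    ∀ᶠ N : ℕ in atTop, v N < η := by
  obtain ⟨M, hM⟩ := (hv.and (eventually_ge_atTop ⌈m⌉₊)).exists_forall_of_atTop
  have hfactor : ∀ N ≥ M, 0 ≤ 1 - m / N ∧ 1 - m / N ≤ 1 := fun N hN => by
    have hmN : m ≤ N := Nat.ceil_le.mp (hM N hN).2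
    exact ⟨by rw [sub_nonneg, div_le_one (by linarith)]; exact hmN,
      by linarith [div_nonneg hm.le (Nat.cast_nonneg (α := ℝ) N)]⟩
  have hstay : ∀ N ≥ M, v N < η → v (N + 1) < η := fun N hN hvN => by
    obtain ⟨h0, h1⟩ := hfactor N hN
    rcases le_total (v N) 0 with hneg | hpos
    · linarith [(hM N hN).1, mul_nonpos_of_nonneg_of_nonpos h0 hneg]
    · linarith [(hM N hN).1, mul_le_of_le_one_left hpos h1]
  suffices hreach : ∃ N ≥ M, v N < η by
    obtain ⟨N₀, hN₀, hvN₀⟩ := hreach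
    filter_upwards [eventually_ge_atTop N₀] with N hN
    induction N, hN using Nat.le_induction with
    | base => exact hvN₀
    | succ N hN ih => exact hstay N (hN₀.trans hN) ih
  by_contra! hbig
  -- while `v ≥ η`, each step lowers `v` by at least `m η / N`, and the harmonic series diverges
  have hdescent : ∀ k, v (k + M) + m * η * ∑ i ∈ range k, 1 / ((i + M : ℕ) : ℝ) ≤ v M := by
    intro k
    induction k with
    | zero => simp
    | succ k ih =>
      have hstep := (hM (k + M) (by omega)).1
      have hvk := hbig (k + M) (by omega)
      rw [sum_range_succ, show k + 1 + M = k + M + 1 by omega]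
      have hle : m * η / (k + M : ℕ) ≤ m * v (k + M) / (k + M : ℕ) := by gcongr
      have : (1 - m / (k + M : ℕ)) * v (k + M) = v (k + M) - m * v (k + M) / (k + M : ℕ) := by
        ring
      have : m * η * (1 / ((k + M : ℕ) : ℝ)) = m * η / (k + M : ℕ) := by ring
      linarith
  refine Real.not_summable_one_div_natCast ((summable_nat_add_iff M).mp ?_)
  refine summable_of_sum_range_le (c := (v M - η) / (m * η)) (fun i => by positivity) fun k => ?_
  rw [le_div_iff₀ (by positivity)]
  have := hbig (k + M) (by omega)
  have := hdescent k
  push_cast at *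
  linarith

lemma tendsto_one_of_tendsto_mul_one_sub {r : ℕ → ℝ} {μ : ℝ}
    (hr : Tendsto (fun N : ℕ => N * (1 - r N)) atTop (𝓝 μ)) : Tendsto r atTop (𝓝 1) := by
  have h := tendsto_const_nhds (x := (1 : ℝ)) |>.sub (hr.mul tendsto_one_div_atTop_nhds_zero_nat)
  rw [mul_zero, sub_zero] at h
  refine h.congr' ?_
  filter_upwards [eventually_ne_atTop 0] with N hN
  field_simp
  ring

lemma tendsto_zero_of_recurrence {d r g : ℕ → ℝ} {μ : ℝ} (hμ : 0 < μ)
    (hr : Tendsto (fun N : ℕ => N * (1 - r N)) atTop (𝓝 μ))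
    (hg : Tendsto (fun N : ℕ => N * g N) atTop (𝓝 0))
    (hrec : ∀ᶠ N : ℕ in atTop, d (N + 1) = r N * d N + g N) :
    Tendsto d atTop (𝓝 0) := by
  rw [Metric.tendsto_nhds]
  intro ε hε
  set η := ε * μ / 4
  have hη : 0 < η := by positivity
  have hstep : ∀ᶠ N : ℕ in atTop,
      |d (N + 1)| - 2 * η / μ ≤ (1 - μ / 2 / N) * (|d N| - 2 * η / μ) := by
    filter_upwards [hrec, hr.eventually (eventually_gt_nhds (half_lt_self hμ)),
      (tendsto_one_of_tendsto_mul_one_sub hr).eventually (eventually_gt_nhds zero_lt_one),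
      (Metric.tendsto_nhds.mp hg) η hη, eventually_gt_atTop 0] with N hrecN hrN hr0 hgN hN
    have hN' : (0 : ℝ) < N := by exact_mod_cast hN
    rw [Real.dist_eq, sub_zero, abs_mul, Nat.abs_cast] at hgN
    have hgN' : |g N| ≤ η / N := by rw [le_div_iff₀ hN']; linarith
    have hrN' : μ / 2 / N < 1 - r N := by rw [div_lt_iff₀ hN']; linarith
    calc |d (N + 1)| - 2 * η / μ ≤ r N * |d N| + η / N - 2 * η / μ := by
          have := abs_add_le (r N * d N) (g N)
          rw [abs_mul, abs_of_pos hr0] at this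
          rw [hrecN]
          linarith
      _ ≤ (1 - μ / 2 / N) * |d N| + η / N - 2 * η / μ := by gcongr; linarith
      _ = (1 - μ / 2 / N) * (|d N| - 2 * η / μ) := by field_simp; ring
  filter_upwards [eventually_lt_of_le_one_sub_div_mul (v := fun N => |d N| - 2 * η / μ)
    (half_pos hμ) (by positivity : 0 < 2 * η / μ) hstep] with N hN
  rw [Real.dist_eq, sub_zero]
  have : 2 * η / μ + 2 * η / μ = ε := by field_simp; ring
  linarith

lemma tendsto_of_recurrence {a r b : ℕ → ℝ} {μ β : ℝ} (hμ : 0 < μ)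
    (hr : Tendsto (fun N : ℕ => N * (1 - r N)) atTop (𝓝 μ))
    (hb : Tendsto (fun N : ℕ => N * b N) atTop (𝓝 β))
    (hrec : ∀ᶠ N : ℕ in atTop, a (N + 1) = r N * a N + b N) :
    Tendsto a atTop (𝓝 (β / μ)) := by
  have hg : Tendsto (fun N : ℕ => N * (b N - (1 - r N) * (β / μ))) atTop (𝓝 0) := by
    have h := hb.sub (hr.mul_const (β / μ))
    rw [mul_div_cancel₀ _ hμ.ne', sub_self] at h
    exact h.congr fun N => by ring
  have hd := tendsto_zero_of_recurrence (d := fun N => a N - β / μ) hμ hr hg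
    (hrec.mono fun N hN => by rw [hN]; ring)
  simpa using hd.add_const (β / μ)

lemma tendsto_mul_one_sub_div_succ_pow (k : ℕ) :
    Tendsto (fun N : ℕ => N * (1 - ((N : ℝ) / (N + 1)) ^ k)) atTop (𝓝 k) := by
  have hratio := tendsto_natCast_div_add_atTop (1 : ℝ)
  have hgeom : Tendsto (fun N : ℕ => ∑ i ∈ range k, ((N : ℝ) / (N + 1)) ^ i) atTop (𝓝 k) := by
    simpa using tendsto_finsetSum (range k) fun i _ => hratio.pow i
  have h := hgeom.mul hratio
  rw [mul_one] at h
  refine h.congr fun N => ?_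
  have hN : (N : ℝ) + 1 ≠ 0 := by positivity
  rw [← geom_sum_mul_neg]
  field_simp
  ring

lemma tendsto_div_pow_succ_of_recurrence (k : ℕ) {w x y : ℕ → ℝ} {lam β : ℝ}
    (hk : 0 < lam + k + 1)
    (hw : Tendsto (fun N : ℕ => N * (1 - w N)) atTop (𝓝 lam))
    (hy : Tendsto (fun N : ℕ => y N / (N : ℝ) ^ k) atTop (𝓝 β))
    (hrec : ∀ᶠ N : ℕ in atTop, x (N + 1) = w N * (x N + y N)) :
    Tendsto (fun N : ℕ => x N / (N : ℝ) ^ (k + 1)) atTop (𝓝 (β / (lam + k + 1))) := by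
  have hratio := (tendsto_natCast_div_add_atTop (1 : ℝ)).pow (k + 1)
  have hw1 := tendsto_one_of_tendsto_mul_one_sub hw
  refine tendsto_of_recurrence (r := fun N => w N * ((N : ℝ) / (N + 1)) ^ (k + 1))
    (b := fun N => w N * y N / ((N : ℝ) + 1) ^ (k + 1)) hk ?_ ?_ ?_
  · have h := (hw.mul hratio).add (tendsto_mul_one_sub_div_succ_pow (k + 1))
    rw [one_pow, mul_one, Nat.cast_succ, ← add_assoc] at h
    exact h.congr fun N => by ring
  · have h := (hw1.mul hy).mul hratio
    rw [one_mul, one_pow, mul_one] at h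
    refine h.congr' ?_
    filter_upwards [eventually_ne_atTop 0] with N hN
    have hN' : (N : ℝ) ≠ 0 := by exact_mod_cast hN
    have hN1 : (N : ℝ) + 1 ≠ 0 := by positivity
    rw [div_pow]
    field_simp
    ring
  · filter_upwards [hrec, eventually_ne_atTop 0] with N hN hN0
    have hN' : (N : ℝ) ≠ 0 := by exact_mod_cast hN0
    have hN1 : (N : ℝ) + 1 ≠ 0 := by positivity
    rw [hN]
    push_cast
    rw [div_pow]
    field_simp

section TailProducts

variable (w : ℕ → ℝ)

def tailProdSum (N : ℕ) : ℝ :=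
  ∑ n ∈ Ico 1 N, ∏ i ∈ Ico n N, w i

def weightedTailProdSum (N : ℕ) : ℝ :=
  ∑ n ∈ Ico 1 N, ((N : ℝ) - n) * ∏ i ∈ Ico n N, w i

variable {w}

lemma prod_Ico_succ_top_of_mem {n N : ℕ} (hn : n ∈ Ico 1 (N + 1)) :
    ∏ i ∈ Ico n (N + 1), w i = w N * ∏ i ∈ Ico n N, w i := by
  rw [prod_Ico_succ_top (by simp at hn; omega), mul_comm]

lemma tailProdSum_add_one {N : ℕ} (hN : 1 ≤ N) :
    tailProdSum w N + 1 = ∑ n ∈ Ico 1 (N + 1), ∏ i ∈ Ico n N, w i := by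
  rw [sum_Ico_succ_top hN, Ico_self, prod_empty, tailProdSum]

lemma tailProdSum_succ {N : ℕ} (hN : 1 ≤ N) :
    tailProdSum w (N + 1) = w N * (tailProdSum w N + 1) := by
  rw [tailProdSum_add_one hN, mul_sum, tailProdSum]
  exact sum_congr rfl fun n hn => prod_Ico_succ_top_of_mem hn

lemma weightedTailProdSum_succ {N : ℕ} (hN : 1 ≤ N) :
    weightedTailProdSum w (N + 1) = w N * (weightedTailProdSum w N + (tailProdSum w N + 1)) := by
  have hQ : weightedTailProdSum w N =
      ∑ n ∈ Ico 1 (N + 1), ((N : ℝ) - n) * ∏ i ∈ Ico n N, w i := by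
    rw [sum_Ico_succ_top hN, sub_self, zero_mul, add_zero, weightedTailProdSum]
  rw [tailProdSum_add_one hN, hQ, ← sum_add_distrib, mul_sum, weightedTailProdSum]
  refine sum_congr rfl fun n hn => ?_
  rw [prod_Ico_succ_top_of_mem hn]
  push_cast
  ring

end TailProducts

lemma one_add_sum_Icc_eq {w : ℕ → ℝ} {N : ℕ} (hN : 1 ≤ N) :
    1 + ∑ n ∈ Icc 1 (N - 1), (2 * (N : ℝ) + 1 - 2 * (n : ℝ)) * ∏ i ∈ Icc n (N - 1), w i
      = 1 + 2 * weightedTailProdSum w N + tailProdSum w N := by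
  have hIcc : ∀ n, Icc n (N - 1) = Ico n N := fun n => by ext; simp; omega
  simp only [hIcc, weightedTailProdSum, tailProdSum, mul_sum, add_assoc, ← sum_add_distrib]
  congr 1
  exact sum_congr rfl fun n _ => by ring

theorem stmt_10_general (w : ℕ → ℝ) (lam : ℝ) (hlam : 0 < lam)
    (hlim : Tendsto (fun i : ℕ => (i : ℝ) * (1 - w i)) atTop (nhds lam)) :
    Tendsto (fun N : ℕ =>
        (1 + ∑ n ∈ Finset.Icc 1 (N - 1),
            (2 * (N : ℝ) + 1 - 2 * (n : ℝ)) * ∏ i ∈ Finset.Icc n (N - 1), w i) / (N : ℝ) ^ 2)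
      atTop (nhds (2 / ((lam + 1) * (lam + 2)))) := by
  have hS : Tendsto (fun N : ℕ => tailProdSum w N / (N : ℝ) ^ (0 + 1)) atTop
      (𝓝 (1 / (lam + (0 : ℕ) + 1))) :=
    tendsto_div_pow_succ_of_recurrence 0 (by simp; linarith) hlim (y := fun _ => 1) (by simp)
      ((eventually_ge_atTop 1).mono fun N hN => tailProdSum_succ hN)
  have hS1 : Tendsto (fun N : ℕ => (tailProdSum w N + 1) / (N : ℝ) ^ 1) atTop
      (𝓝 (1 / (lam + 1))) := by
    have h := hS.add tendsto_one_div_atTop_nhds_zero_nat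
    simp only [zero_add, Nat.cast_zero, add_zero, pow_one] at h ⊢
    exact h.congr fun N => (add_div _ _ _).symm
  have hQ := tendsto_div_pow_succ_of_recurrence 1 (by positivity) hlim hS1
    ((eventually_ge_atTop 1).mono fun N hN => weightedTailProdSum_succ hN)
  have hsum := ((tendsto_one_div_atTop_nhds_zero_nat.pow 2).add (hQ.const_mul 2)).add
    (hS.mul tendsto_one_div_atTop_nhds_zero_nat)
  have hlimit : (0 : ℝ) ^ 2 + 2 * (1 / (lam + 1) / (lam + (1 : ℕ) + 1))
      + 1 / (lam + (0 : ℕ) + 1) * 0 = 2 / ((lam + 1) * (lam + 2)) := by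
    push_cast
    field_simp
    ring
  rw [hlimit] at hsum
  refine hsum.congr' ?_
  filter_upwards [eventually_ge_atTop 1] with N hN
  rw [one_add_sum_Icc_eq hN]
  have : (N : ℝ) ≠ 0 := by positivity
  field_simp
  ring

/-- If `w_i ∈ [0,1)` with `i(1 - w_i) → λ > 0`, then
`(1 + ∑_{n=1}^{N-1} (2N+1-2n) ∏_{i=n}^{N-1} w_i)/N² → 2/((λ+1)(λ+2))`. -/
theorem stmt_10 (w : ℕ → ℝ) (lam : ℝ) (hlam : 0 < lam)
    (hw : ∀ i, w i ∈ Set.Ico (0 : ℝ) 1)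
    (hlim : Tendsto (fun i : ℕ => (i : ℝ) * (1 - w i)) atTop (nhds lam)) :
    Tendsto (fun N : ℕ =>
        (1 + ∑ n ∈ Finset.Icc 1 (N - 1),
            (2 * (N : ℝ) + 1 - 2 * (n : ℝ)) * ∏ i ∈ Finset.Icc n (N - 1), w i) / (N : ℝ) ^ 2)
      atTop (nhds (2 / ((lam + 1) * (lam + 2)))) :=
  stmt_10_general w lam hlam hlim
end

section
/- Suppose w_i ∈ [0,1) with i·(1-w_i) → λ > 0. Define E_N = 1 + Σ_{n=1}^{N-1} Π_{i=n}^{N-1} w_i and S_N = 1 + Σ_{n=1}^{N-1}(2N+1-2n)Π_{i=n}^{N-1} w_i. Then (S_N - E_N²)/N² → λ/((λ+1)²(λ+2)) as N → ∞. -/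
/-!
Both sums satisfy first-order linear recurrences, `E (N+1) = 1 + w N * E N` and
`S (N+1) = 1 + 2 w N E N + w N S N`. For a recurrence `x (n+1) = c n + w n x n`, dividing by
the partial products `p n = ∏ w i` makes the increments of `x / p` equal to `c n / p (n+1)`,
so Stolz–Cesàro applied to `(x / p) / (φ / p)` gives `x n / φ n → lim c n / (φ (n+1) - w n φ n)`.
Since `n (1 - w n) → λ`, this yields `E N / N → 1 / (1 + λ)` with `φ N = N`, then
`S N / N² → 2 / ((1 + λ)(2 + λ))` with `φ N = N²`, and the variance is the difference of the two.
-/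
open Filter Finset Asymptotics
open scoped Topology

theorem tendsto_div_of_tendsto_sub_div_sub {a b : ℕ → ℝ} {L : ℝ} (hb : StrictMono b)
    (hbtop : Tendsto b atTop atTop)
    (h : Tendsto (fun n => (a (n + 1) - a n) / (b (n + 1) - b n)) atTop (𝓝 L)) :
    Tendsto (fun n => a n / b n) atTop (𝓝 L) := by
  set d : ℕ → ℝ := fun n => a n - L * b n
  have hΔb : ∀ n, 0 < b (n + 1) - b n := fun n => sub_pos.2 (hb n.lt_succ_self)
  have hΔ : (fun n => d (n + 1) - d n) =o[atTop] fun n => b (n + 1) - b n := by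
    refine (isLittleO_iff_tendsto' (.of_forall fun n h => absurd h (hΔb n).ne')).2 ?_
    simpa using (h.sub_const L).congr fun n => by
      field_simp [(hΔb n).ne']
      ring
  have hsum := hΔ.sum_range (fun n => (hΔb n).le)
    (by
      simp only [sum_range_sub]
      simpa only [sub_eq_add_neg] using tendsto_atTop_add_const_right _ _ hbtop)
  simp only [sum_range_sub] at hsum
  have hconst (c : ℝ) : (fun _ => c) =o[atTop] b :=
    isLittleO_const_left.2 (.inr (tendsto_norm_atTop_atTop.comp hbtop))
  have hd : d =o[atTop] b := by
    have hb0 : (fun n => b n - b 0) =O[atTop] b := (isBigO_refl b _).sub (hconst (b 0)).isBigO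
    simpa using (hsum.trans_isBigO hb0).add (hconst (d 0))
  refine (add_zero L ▸ hd.tendsto_div_nhds_zero.const_add L).congr' ?_
  filter_upwards [hbtop.eventually_gt_atTop 0] with n hn
  field_simp [hn.ne']
  ring

theorem tendsto_div_of_linear_recurrence {w c x φ : ℕ → ℝ} {L : ℝ}
    (hw : ∀ᶠ n in atTop, 0 < w n ∧ w n ≤ 1)
    (hx : ∀ᶠ n in atTop, x (n + 1) = c n + w n * x n)
    (hφ : StrictMono φ) (hφtop : Tendsto φ atTop atTop)
    (hc : Tendsto (fun n => c n / (φ (n + 1) - w n * φ n)) atTop (𝓝 L)) :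
    Tendsto (fun n => x n / φ n) atTop (𝓝 L) := by
  obtain ⟨i₀, hi₀⟩ := eventually_atTop.1 (hw.and (hx.and (hφtop.eventually_ge_atTop 0)))
  set p : ℕ → ℝ := fun n => ∏ i ∈ Ico i₀ n, w i
  have hp_pos (n : ℕ) : 0 < p n := prod_pos fun i hi => (hi₀ i (mem_Ico.1 hi).1).1.1
  have hp_le (n : ℕ) : p n ≤ 1 := prod_le_one (fun i hi => (hi₀ i (mem_Ico.1 hi).1).1.1.le)
    fun i hi => (hi₀ i (mem_Ico.1 hi).1).1.2
  have hp_succ {n : ℕ} (hn : i₀ ≤ n) : p (n + 1) = p n * w n := prod_Ico_succ_top hn w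
  have hp_early {n : ℕ} (hn : n ≤ i₀) : p n = 1 := by simp [p, Ico_eq_empty_of_le hn]
  have hb : StrictMono fun n => φ n / p n := by
    refine strictMono_nat_of_lt_succ fun n => ?_
    rcases lt_or_ge n i₀ with hn | hn
    · simpa [hp_early hn.le, hp_early hn] using hφ n.lt_succ_self
    · obtain ⟨⟨hw0, hw1⟩, -, hφ0⟩ := hi₀ n hn
      rw [hp_succ hn, div_lt_div_iff₀ (hp_pos n) (mul_pos (hp_pos n) hw0)]
      nlinarith [hφ n.lt_succ_self, hp_pos n, mul_le_of_le_one_right hφ0 hw1]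
  have hbtop : Tendsto (fun n => φ n / p n) atTop atTop := by
    refine tendsto_atTop_mono' _ ?_ hφtop
    filter_upwards [hφtop.eventually_ge_atTop 0] with n hn
    exact le_div_self hn (hp_pos n) (hp_le n)
  refine (tendsto_div_of_tendsto_sub_div_sub (a := fun n => x n / p n) hb hbtop ?_).congr
    fun n => div_div_div_cancel_right₀ (hp_pos n).ne' _ _
  refine hc.congr' ?_
  filter_upwards [eventually_ge_atTop i₀] with n hn
  obtain ⟨⟨hw0, -⟩, hxn, -⟩ := hi₀ n hn
  rw [hxn, hp_succ hn]
  field_simp [(hp_pos n).ne', hw0.ne']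
  ring

section MomentSums

variable {R : Type*} [CommRing R] (w : ℕ → R)

def expectationSum (N : ℕ) : R :=
  1 + ∑ n ∈ Icc 1 (N - 1), ∏ i ∈ Icc n (N - 1), w i

def secondMomentSum (N : ℕ) : R :=
  1 + ∑ n ∈ Icc 1 (N - 1), (2 * (N : R) + 1 - 2 * (n : R)) * ∏ i ∈ Icc n (N - 1), w i

theorem expectationSum_succ {N : ℕ} (hN : N ≠ 0) :
    expectationSum w (N + 1) = 1 + w N * expectationSum w N := by
  obtain ⟨M, rfl⟩ : ∃ M, N = M + 1 := ⟨N - 1, by omega⟩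
  simp only [expectationSum, Nat.add_sub_cancel]
  rw [sum_Icc_succ_top (by omega), Icc_self, prod_singleton,
    sum_congr rfl fun n hn => prod_Icc_succ_top (Nat.le_succ_of_le (mem_Icc.1 hn).2) w,
    ← sum_mul]
  ring

theorem secondMomentSum_succ {N : ℕ} (hN : N ≠ 0) :
    secondMomentSum w (N + 1) =
      1 + 2 * w N * expectationSum w N + w N * secondMomentSum w N := by
  obtain ⟨M, rfl⟩ : ∃ M, N = M + 1 := ⟨N - 1, by omega⟩
  simp only [secondMomentSum, expectationSum, Nat.add_sub_cancel]
  have hterm : ∀ n ∈ Icc 1 M,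
      (2 * ((M + 1 + 1 : ℕ) : R) + 1 - 2 * n) * ∏ i ∈ Icc n (M + 1), w i =
        2 * w (M + 1) * ∏ i ∈ Icc n M, w i +
          w (M + 1) * ((2 * ((M + 1 : ℕ) : R) + 1 - 2 * n) * ∏ i ∈ Icc n M, w i) := by
    intro n hn
    rw [prod_Icc_succ_top (Nat.le_succ_of_le (mem_Icc.1 hn).2)]
    push_cast
    ring
  rw [sum_Icc_succ_top (by omega), Icc_self, prod_singleton, sum_congr rfl hterm,
    sum_add_distrib, ← mul_sum, ← mul_sum]
  push_cast
  ring

end MomentSums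

theorem tendsto_nhds_one_of_tendsto_natCast_mul_one_sub {w : ℕ → ℝ} {lam : ℝ}
    (h : Tendsto (fun n : ℕ => (n : ℝ) * (1 - w n)) atTop (𝓝 lam)) :
    Tendsto w atTop (𝓝 1) := by
  have := tendsto_const_nhds (x := (1 : ℝ)).sub (h.mul tendsto_inv_atTop_nhds_zero_nat)
  rw [mul_zero, sub_zero] at this
  refine this.congr' ?_
  filter_upwards [eventually_ne_atTop 0] with n hn
  field_simp
  ring

section Limits

variable {w : ℕ → ℝ} {lam : ℝ}

theorem tendsto_expectationSum_div (hlam : 0 ≤ lam)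
    (hlim : Tendsto (fun n : ℕ => (n : ℝ) * (1 - w n)) atTop (𝓝 lam))
    (hw : ∀ᶠ n in atTop, 0 < w n ∧ w n ≤ 1) :
    Tendsto (fun n : ℕ => expectationSum w n / n) atTop (𝓝 (1 + lam)⁻¹) := by
  refine tendsto_div_of_linear_recurrence hw
    ((eventually_ne_atTop 0).mono fun n hn => expectationSum_succ w hn)
    Nat.strictMono_cast tendsto_natCast_atTop_atTop ?_
  refine ((hlim.const_add 1).inv₀ (by positivity)).congr fun n => ?_
  push_cast
  ring

theorem tendsto_secondMomentSum_div (hlam : 0 ≤ lam)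
    (hlim : Tendsto (fun n : ℕ => (n : ℝ) * (1 - w n)) atTop (𝓝 lam))
    (hw : ∀ᶠ n in atTop, 0 < w n ∧ w n ≤ 1) :
    Tendsto (fun n : ℕ => secondMomentSum w n / (n : ℝ) ^ 2) atTop
      (𝓝 (2 * (1 + lam)⁻¹ / (2 + lam))) := by
  refine tendsto_div_of_linear_recurrence hw
    ((eventually_ne_atTop 0).mono fun n hn => secondMomentSum_succ w hn)
    (fun m n h => by gcongr) ((tendsto_pow_atTop two_ne_zero).comp tendsto_natCast_atTop_atTop)
    ?_
  have hinv := tendsto_inv_atTop_nhds_zero_nat (𝕜 := ℝ)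
  have hw1 := tendsto_nhds_one_of_tendsto_natCast_mul_one_sub hlim
  have hnum := hinv.add ((hw1.const_mul 2).mul (tendsto_expectationSum_div hlam hlim hw))
  have hden := (hinv.const_add 2).add hlim
  have hlim' := hnum.div hden (by positivity)
  rw [show (0 + 2 * 1 * (1 + lam)⁻¹) / (2 + 0 + lam) = 2 * (1 + lam)⁻¹ / (2 + lam) by ring]
    at hlim'
  refine hlim'.congr' ?_
  filter_upwards [eventually_ne_atTop 0] with n hn
  simp only [Pi.div_apply]
  field_simp
  push_cast
  ring

end Limits

/-- Variance asymptotic: with `E_N` and `S_N` the first and second moment sums,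
`(S_N - E_N²)/N² → λ/((λ+1)²(λ+2))`. -/
theorem stmt_11 (w : ℕ → ℝ) (lam : ℝ) (hlam : 0 < lam)
    (hw : ∀ i, w i ∈ Set.Ico (0 : ℝ) 1)
    (hlim : Tendsto (fun i : ℕ => (i : ℝ) * (1 - w i)) atTop (nhds lam))
    (E S : ℕ → ℝ)
    (hE : ∀ N, E N = 1 + ∑ n ∈ Finset.Icc 1 (N - 1), ∏ i ∈ Finset.Icc n (N - 1), w i)
    (hS : ∀ N, S N = 1 + ∑ n ∈ Finset.Icc 1 (N - 1),
        (2 * (N : ℝ) + 1 - 2 * (n : ℝ)) * ∏ i ∈ Finset.Icc n (N - 1), w i) :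
    Tendsto (fun N : ℕ => (S N - (E N) ^ 2) / (N : ℝ) ^ 2) atTop
      (nhds (lam / ((lam + 1) ^ 2 * (lam + 2)))) := by
  obtain rfl : E = expectationSum w := funext hE
  obtain rfl : S = secondMomentSum w := funext hS
  have hw' : ∀ᶠ n in atTop, 0 < w n ∧ w n ≤ 1 :=
    ((tendsto_nhds_one_of_tendsto_natCast_mul_one_sub hlim).eventually
      (lt_mem_nhds one_pos)).mono fun n hn => ⟨hn, (hw n).2.le⟩
  have hvar := (tendsto_secondMomentSum_div hlam.le hlim hw').sub
    ((tendsto_expectationSum_div hlam.le hlim hw').pow 2)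
  rw [show 2 * (1 + lam)⁻¹ / (2 + lam) - ((1 + lam)⁻¹) ^ 2 =
      lam / ((lam + 1) ^ 2 * (lam + 2)) by field_simp; ring] at hvar
  exact hvar.congr fun n => by rw [div_pow, div_sub_div_same]
end

section
/- If a sequence (v_n) of reals in [0, b) satisfies v_{n+1} = v_n + c(b - v_n)^{p+1} for constants c > 0 and p > 0, then n^{1/p}(b - v_n) → (cp)^{-1/p} as n → ∞. -/
open Filter Real Topology

/-!
Write `w n = b - v n`, so that `w (n+1) = w n (1 - c w_n^p)` with `w` positive and decreasing;
its limit `L` satisfies `L = L - c L^(p+1)`, hence `w → 0`. Passing to `x n = w n ^ (-p)`, the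
increment `x (n+1) - x n = c ((1 - t)^(-p) - 1) / t` with `t = c w_n^p → 0` tends to
`c p = c · d/dt (1 - t)^(-p) |_{t=0}`, so `x n / n → c p` by Cesàro, and
`n^(1/p) w n = (x n / n)^(-1/p)`.
-/

theorem tendsto_one_sub_rpow_neg_sub_one_div (p : ℝ) :
    Tendsto (fun t : ℝ => ((1 - t) ^ (-p) - 1) / t) (𝓝[≠] 0) (𝓝 p) := by
  have hderiv : HasDerivAt (fun t : ℝ => (1 - t) ^ (-p)) p 0 := by
    have h := ((hasDerivAt_id (0 : ℝ)).const_sub 1).rpow_const (p := -p) (Or.inl (by norm_num))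
    simpa using h
  refine (hasDerivAt_iff_tendsto_slope_zero.1 hderiv).congr fun t => ?_
  simp [div_eq_inv_mul]

theorem Filter.Tendsto.div_natCast_of_tendsto_sub {x : ℕ → ℝ} {l : ℝ}
    (h : Tendsto (fun n => x (n + 1) - x n) atTop (𝓝 l)) :
    Tendsto (fun n : ℕ => x n / n) atTop (𝓝 l) := by
  have hmean : Tendsto (fun n : ℕ => (n : ℝ)⁻¹ * (x n - x 0)) atTop (𝓝 l) := by
    simpa only [Finset.sum_range_sub x] using h.cesaro
  have hinv : Tendsto (fun n : ℕ => (n : ℝ)⁻¹ * x 0) atTop (𝓝 0) := by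
    simpa using tendsto_inv_atTop_zero.comp tendsto_natCast_atTop_atTop |>.mul_const (x 0)
  simpa [div_eq_inv_mul, ← mul_add] using hmean.add hinv

theorem sub_mul_rpow_add_one_rpow_neg_sub_rpow_neg {c p y : ℝ} (hc : c ≠ 0) (hy : 0 < y)
    (hy' : 0 < y - c * y ^ (p + 1)) :
    (y - c * y ^ (p + 1)) ^ (-p) - y ^ (-p) =
      c * (((1 - c * y ^ p) ^ (-p) - 1) / (c * y ^ p)) := by
  have hyp : 0 < y ^ p := rpow_pos_of_pos hy p
  have hfac : y - c * y ^ (p + 1) = y * (1 - c * y ^ p) := by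
    rw [rpow_add hy, rpow_one]; ring
  have hone : 0 < 1 - c * y ^ p := by
    rw [hfac] at hy'; exact pos_of_mul_pos_right hy' hy.le
  rw [hfac, mul_rpow hy.le hone.le, rpow_neg hy.le]
  field_simp

section Recurrence

variable {c p : ℝ} {w : ℕ → ℝ}

theorem tendsto_zero_of_eq_sub_mul_rpow (hc : 0 < c) (hp : 0 < p) (hw : ∀ n, 0 < w n)
    (hrec : ∀ n, w (n + 1) = w n - c * w n ^ (p + 1)) :
    Tendsto w atTop (𝓝 0) := by
  have hanti : Antitone w := antitone_nat_of_succ_le fun n => by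
    rw [hrec]
    linarith [mul_pos hc (rpow_pos_of_pos (hw n) (p + 1))]
  have hbdd : BddBelow (Set.range w) := ⟨0, by rintro _ ⟨n, rfl⟩; exact (hw n).le⟩
  set L := ⨅ n, w n
  have hL : Tendsto w atTop (𝓝 L) := tendsto_atTop_ciInf hanti hbdd
  have hL0 : 0 ≤ L := le_ciInf fun n => (hw n).le
  have hfixed : L = L - c * L ^ (p + 1) := by
    refine tendsto_nhds_unique (hL.comp (tendsto_add_atTop_nat 1)) ?_
    simp only [Function.comp_def, hrec]
    exact hL.sub ((hL.rpow_const (Or.inr (by positivity))).const_mul c)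
  have hLp : L ^ (p + 1) = 0 := by
    have : c * L ^ (p + 1) = 0 := by linarith
    simpa [hc.ne'] using this
  rwa [(rpow_eq_zero hL0 (by positivity)).1 hLp] at hL

theorem tendsto_rpow_neg_div_natCast_of_eq_sub_mul_rpow (hc : 0 < c) (hp : 0 < p)
    (hw : ∀ n, 0 < w n) (hrec : ∀ n, w (n + 1) = w n - c * w n ^ (p + 1)) :
    Tendsto (fun n : ℕ => w n ^ (-p) / n) atTop (𝓝 (c * p)) := by
  set t : ℕ → ℝ := fun n => c * w n ^ p
  have ht : Tendsto t atTop (𝓝[≠] 0) := by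
    refine tendsto_nhdsWithin_of_tendsto_nhds_of_eventually_within _ ?_
      (Eventually.of_forall fun n => (mul_pos hc (rpow_pos_of_pos (hw n) p)).ne')
    simpa [t, zero_rpow hp.ne'] using
      ((tendsto_zero_of_eq_sub_mul_rpow hc hp hw hrec).rpow_const (Or.inr hp.le)).const_mul c
  have hincr : ∀ n, w (n + 1) ^ (-p) - w n ^ (-p) = c * (((1 - t n) ^ (-p) - 1) / t n) :=
    fun n => by
      rw [hrec]
      exact sub_mul_rpow_add_one_rpow_neg_sub_rpow_neg hc.ne' (hw n) (hrec n ▸ hw (n + 1))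
  refine Tendsto.div_natCast_of_tendsto_sub ?_
  simpa only [hincr, Function.comp_def] using
    ((tendsto_one_sub_rpow_neg_sub_one_div p).comp ht).const_mul c

end Recurrence

theorem stmt_15_general (b c p : ℝ) (hc : 0 < c) (hp : 0 < p) (v : ℕ → ℝ)
    (hv : ∀ n, v n ∈ Set.Ico (0 : ℝ) b)
    (hrec : ∀ n, v (n + 1) = v n + c * (b - v n) ^ (p + 1)) :
    Tendsto (fun n : ℕ => (n : ℝ) ^ (1 / p) * (b - v n)) atTop
      (nhds ((c * p) ^ (-(1 / p)))) := by
  have hw : ∀ n, 0 < b - v n := fun n => sub_pos.2 (hv n).2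
  have hmean := tendsto_rpow_neg_div_natCast_of_eq_sub_mul_rpow hc hp hw
    fun n => by rw [hrec]; ring
  refine (hmean.rpow_const (Or.inl (by positivity))).congr' ?_
  filter_upwards [eventually_gt_atTop 0] with n hn
  have hn : (0 : ℝ) < n := Nat.cast_pos.2 hn
  rw [div_rpow (rpow_nonneg (hw n).le _) hn.le, ← rpow_mul (hw n).le,
    neg_mul_neg, mul_one_div_cancel hp.ne', rpow_one, rpow_neg hn.le, div_inv_eq_mul, mul_comm]

/-- If a sequence `(v_n)` in `[0, b)` satisfies `v_{n+1} = v_n + c (b - v_n)^{p+1}` with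
`c > 0`, `p > 0`, `v_0 < b`, `c (b - v_0)^p < 1`, then `n^{1/p} (b - v_n) → (c p)^{-1/p}`. -/
theorem stmt_15 (b c p : ℝ) (hc : 0 < c) (hp : 0 < p) (v : ℕ → ℝ)
    (hv : ∀ n, v n ∈ Set.Ico (0 : ℝ) b)
    (hstep : c * (b - v 0) ^ p < 1)
    (hrec : ∀ n, v (n + 1) = v n + c * (b - v n) ^ (p + 1)) :
    Tendsto (fun n : ℕ => (n : ℝ) ^ (1 / p) * (b - v n)) atTop
      (nhds ((c * p) ^ (-(1 / p)))) :=
  stmt_15_general b c p hc hp v hv hrec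
end
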